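/- arXiv:1810.05372 — 5 statements merged into one kernel-verified Lean document; each statement's English description precedes it below -/
import Mathlib

section
/- Savings trick: for every supermartingale M with M(λ) > 1, there exists a supermartingale N with N(λ) = M(λ) such that for every infinite binary sequence X with limsup_n M(X↾n) = ∞, the savings satisfy lim_n S_N(X↾n) = ∞. -/
/-!
Scale `M` down by a factor `2^k`, where `k` counts how often along the string so far the scaled
capital has reached `2`; each time it does, the scaled strategy `N` halves its capital and the
discarded half, at least `1/2`, goes into the savings. Thus `N` stays below `max (M []) 2`,
so along a sequence where `M` is unbounded `k` is unbounded, and the savings, which are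
nondecreasing and at least `k / 2`, tend to infinity.
-/

open Filter Finset

/-- A (deterministic) martingale on binary strings. -/
def IsMartingale (M : List Bool → ℝ) : Prop :=
  (∀ σ, 0 ≤ M σ) ∧ ∀ σ, 2 * M σ = M (σ ++ [false]) + M (σ ++ [true])

/-- A supermartingale on binary strings. -/
def IsSupermartingale (M : List Bool → ℝ) : Prop :=
  (∀ σ, 0 ≤ M σ) ∧ ∀ σ, M (σ ++ [false]) + M (σ ++ [true]) ≤ 2 * M σ

/-- The wager of a (super)martingale at σ. -/
noncomputable def wager (M : List Bool → ℝ) (σ : List Bool) : ℝ :=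
  (M (σ ++ [true]) - M (σ ++ [false])) / 2

/-- The cover of a supermartingale: the martingale with the same initial
capital and the same wagers. -/
noncomputable def cover (M : List Bool → ℝ) (σ : List Bool) : ℝ :=
  M [] + ∑ i ∈ Finset.range σ.length,
    (if σ.getD i false then wager M (σ.take i) else -wager M (σ.take i))

/-- The savings of a supermartingale at σ. -/
noncomputable def savings (M : List Bool → ℝ) (σ : List Bool) : ℝ := cover M σ - M σ

/-- The length-`n` prefix of an infinite binary sequence. -/
def pre (X : ℕ → Bool) (n : ℕ) : List Bool := (List.range n).map X

/-- `M` is `g`-granular: each wager at σ is an integer multiple of `2^{-g(|σ|+1)}`. -/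
def GranularWagers (g : ℕ → ℕ) (M : List Bool → ℝ) : Prop :=
  ∀ σ, ∃ k : ℤ, wager M σ = k * (2:ℝ) ^ (-(g (σ.length + 1) : ℤ))

noncomputable def deposit (M : List Bool → ℝ) (σ : List Bool) : ℝ :=
  M σ - (M (σ ++ [false]) + M (σ ++ [true])) / 2

lemma deposit_eq (M : List Bool → ℝ) (σ : List Bool) (b : Bool) :
    deposit M σ = M σ - (M (σ ++ [b]) + M (σ ++ [!b])) / 2 := by
  cases b <;> simp only [deposit, Bool.not_false, Bool.not_true, add_comm]

lemma cover_append_singleton (M : List Bool → ℝ) (σ : List Bool) (b : Bool) :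
    cover M (σ ++ [b]) = cover M σ + if b then wager M σ else -wager M σ := by
  have hprefix : ∀ i ∈ range σ.length,
      (if (σ ++ [b]).getD i false then wager M ((σ ++ [b]).take i)
        else -wager M ((σ ++ [b]).take i)) =
      if σ.getD i false then wager M (σ.take i) else -wager M (σ.take i) := by
    intro i hi
    rw [mem_range] at hi
    rw [List.getD_append _ _ _ _ hi, List.take_append_of_le_length hi.le]
  rw [cover, cover, List.length_append, List.length_singleton, sum_range_succ,
    sum_congr rfl hprefix, List.getD_append_right _ _ _ _ le_rfl, List.take_left]
  simp only [Nat.sub_self, List.getD_cons_zero, add_assoc]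

lemma savings_nil (M : List Bool → ℝ) : savings M [] = 0 := by
  simp [savings, cover]

lemma savings_append_singleton (M : List Bool → ℝ) (σ : List Bool) (b : Bool) :
    savings M (σ ++ [b]) = savings M σ + deposit M σ := by
  rw [savings, savings, cover_append_singleton, deposit]
  cases b <;> simp only [wager, Bool.false_eq_true, if_false, if_true] <;> ring

lemma pre_succ (X : ℕ → Bool) (n : ℕ) : pre X (n + 1) = pre X n ++ [X n] := by
  simp [pre, List.range_succ]

namespace IsSupermartingale

variable {M : List Bool → ℝ}

lemma deposit_nonneg (hM : IsSupermartingale M) (σ : List Bool) : 0 ≤ deposit M σ := by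
  rw [deposit]
  linarith [hM.2 σ]

lemma apply_append_singleton_le (hM : IsSupermartingale M) (σ : List Bool) (b : Bool) :
    M (σ ++ [b]) ≤ 2 * M σ := by
  linarith [hM.deposit_nonneg σ, deposit_eq M σ b, hM.1 (σ ++ [!b])]

lemma monotone_savings_pre (hM : IsSupermartingale M) (X : ℕ → Bool) :
    Monotone fun n => savings M (pre X n) :=
  monotone_nat_of_le_succ fun n => by
    rw [pre_succ, savings_append_singleton]
    linarith [hM.deposit_nonneg (pre X n)]

end IsSupermartingale

/-- Recursion on the reversed string, so that the head is the last bit. -/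
noncomputable def halvingCountRev (M : List Bool → ℝ) : List Bool → ℕ
  | [] => 0
  | b :: τ =>
    if 2 ≤ M (τ.reverse ++ [b]) / 2 ^ halvingCountRev M τ then halvingCountRev M τ + 1
    else halvingCountRev M τ

noncomputable def halvingCount (M : List Bool → ℝ) (σ : List Bool) : ℕ :=
  halvingCountRev M σ.reverse

noncomputable def halved (M : List Bool → ℝ) (σ : List Bool) : ℝ :=
  M σ / 2 ^ halvingCount M σ

section halved

variable (M : List Bool → ℝ)

lemma halvingCount_nil : halvingCount M [] = 0 := rfl

lemma halved_nil : halved M [] = M [] := by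
  simp [halved, halvingCount_nil]

lemma halvingCount_append_singleton (σ : List Bool) (b : Bool) :
    halvingCount M (σ ++ [b]) =
      if 2 ≤ M (σ ++ [b]) / 2 ^ halvingCount M σ then halvingCount M σ + 1
      else halvingCount M σ := by
  simp only [halvingCount, List.reverse_append, List.reverse_cons, List.reverse_nil,
    List.nil_append, List.singleton_append, halvingCountRev, List.reverse_reverse]
  congr

lemma halved_append_singleton (σ : List Bool) (b : Bool) :
    halved M (σ ++ [b]) =
      if 2 ≤ M (σ ++ [b]) / 2 ^ halvingCount M σ then M (σ ++ [b]) / 2 ^ halvingCount M σ / 2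
      else M (σ ++ [b]) / 2 ^ halvingCount M σ := by
  rw [halved, halvingCount_append_singleton]
  split_ifs
  · rw [pow_succ, div_div]
  · rfl

lemma halved_append_singleton_le {σ : List Bool} {b : Bool} (hM : 0 ≤ M (σ ++ [b])) :
    halved M (σ ++ [b]) ≤ M (σ ++ [b]) / 2 ^ halvingCount M σ := by
  have : 0 ≤ M (σ ++ [b]) / 2 ^ halvingCount M σ := by positivity
  rw [halved_append_singleton]
  split_ifs <;> linarith

end halved

lemma isSupermartingale_halved {M : List Bool → ℝ} (hM : IsSupermartingale M) :
    IsSupermartingale (halved M) := by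
  refine ⟨fun σ => div_nonneg (hM.1 σ) (by positivity), fun σ => ?_⟩
  calc halved M (σ ++ [false]) + halved M (σ ++ [true])
      ≤ M (σ ++ [false]) / 2 ^ halvingCount M σ + M (σ ++ [true]) / 2 ^ halvingCount M σ :=
        add_le_add (halved_append_singleton_le M (hM.1 _)) (halved_append_singleton_le M (hM.1 _))
    _ = (M (σ ++ [false]) + M (σ ++ [true])) / 2 ^ halvingCount M σ := by rw [add_div]
    _ ≤ 2 * M σ / 2 ^ halvingCount M σ := by gcongr; exact hM.2 σ
    _ = 2 * halved M σ := by rw [mul_div_assoc, halved]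

namespace IsSupermartingale

variable {M : List Bool → ℝ}

lemma halved_le_max (hM : IsSupermartingale M) (σ : List Bool) :
    halved M σ ≤ max (M []) 2 := by
  induction σ using List.reverseRecOn with
  | nil => simp [halved_nil]
  | append_singleton σ b ih =>
    rw [halved_append_singleton]
    split_ifs with hbig
    · calc M (σ ++ [b]) / 2 ^ halvingCount M σ / 2
          ≤ 2 * M σ / 2 ^ halvingCount M σ / 2 := by
            gcongr; exact hM.apply_append_singleton_le σ b
        _ = halved M σ := by rw [halved]; ring
        _ ≤ max (M []) 2 := ih
    · exact (not_le.mp hbig).le.trans (le_max_right _ _)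

lemma half_le_deposit_halved (hM : IsSupermartingale M) {σ : List Bool} {b : Bool}
    (hbig : 2 ≤ M (σ ++ [b]) / 2 ^ halvingCount M σ) :
    1 / 2 ≤ deposit (halved M) σ := by
  have hb : halved M (σ ++ [b]) = M (σ ++ [b]) / 2 ^ halvingCount M σ / 2 := by
    rw [halved_append_singleton, if_pos hbig]
  have hnb := halved_append_singleton_le M (hM.1 (σ ++ [!b]))
  have hsum : M (σ ++ [b]) / 2 ^ halvingCount M σ + M (σ ++ [!b]) / 2 ^ halvingCount M σ
      ≤ 2 * halved M σ := by
    rw [← add_div, halved, ← mul_div_assoc]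
    gcongr
    linarith [hM.deposit_nonneg σ, deposit_eq M σ b]
  rw [deposit_eq _ σ b, hb]
  linarith

lemma halvingCount_div_two_le_savings_halved (hM : IsSupermartingale M) (σ : List Bool) :
    (halvingCount M σ : ℝ) / 2 ≤ savings (halved M) σ := by
  induction σ using List.reverseRecOn with
  | nil => simp [halvingCount_nil, savings_nil]
  | append_singleton σ b ih =>
    rw [savings_append_singleton, halvingCount_append_singleton]
    split_ifs with hbig
    · push_cast
      linarith [hM.half_le_deposit_halved hbig]
    · linarith [(isSupermartingale_halved hM).deposit_nonneg σ]

lemma lt_halvingCount (hM : IsSupermartingale M) {σ : List Bool} {K : ℕ}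
    (hσ : max (M []) 2 * 2 ^ K < M σ) : K < halvingCount M σ := by
  have : max (M []) 2 * 2 ^ K < max (M []) 2 * 2 ^ halvingCount M σ :=
    calc max (M []) 2 * 2 ^ K < M σ := hσ
      _ = halved M σ * 2 ^ halvingCount M σ := by
        rw [halved, div_mul_cancel₀ _ (by positivity)]
      _ ≤ max (M []) 2 * 2 ^ halvingCount M σ := by gcongr; exact hM.halved_le_max σ
  have hpos : (0 : ℝ) < max (M []) 2 := lt_max_of_lt_right two_pos
  exact (pow_lt_pow_iff_right₀ one_lt_two).mp (lt_of_mul_lt_mul_left this hpos.le)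

end IsSupermartingale

theorem savings_trick_general (M : List Bool → ℝ) (hM : IsSupermartingale M) :
    ∃ N : List Bool → ℝ, IsSupermartingale N ∧ N [] = M [] ∧
      ∀ X : ℕ → Bool,
        (∀ C : ℝ, ∃ᶠ n in atTop, C < M (pre X n)) →
        Tendsto (fun n => savings N (pre X n)) atTop atTop := by
  refine ⟨halved M, isSupermartingale_halved hM, halved_nil M, fun X hX => ?_⟩
  refine tendsto_atTop_atTop_of_monotone
    ((isSupermartingale_halved hM).monotone_savings_pre X) fun C => ?_
  obtain ⟨K, hK⟩ := exists_nat_ge (2 * C)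
  obtain ⟨n, hn⟩ := (hX (max (M []) 2 * 2 ^ K)).exists
  have hKn : (K : ℝ) < halvingCount M (pre X n) := by exact_mod_cast hM.lt_halvingCount hn
  exact ⟨n, by linarith [hM.halvingCount_div_two_le_savings_halved (pre X n)]⟩

/-- Savings trick: any supermartingale with initial capital above 1 can be turned into a
supermartingale with the same initial capital whose savings tend to infinity along every
sequence where the original succeeds. -/
theorem savings_trick (M : List Bool → ℝ) (hM : IsSupermartingale M) (h1 : 1 < M []) :
    ∃ N : List Bool → ℝ, IsSupermartingale N ∧ N [] = M [] ∧
      ∀ X : ℕ → Bool,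
        (∀ C : ℝ, ∃ᶠ n in atTop, C < M (pre X n)) →
        Tendsto (fun n => savings N (pre X n)) atTop atTop :=
  savings_trick_general M hM
end

section
/- Given nondecreasing g : ℕ → ℕ and a g-granular supermartingale M, there exists a supermartingale N such that |M(σ) − N(σ)| is bounded by a constant over all σ, the function σ ↦ N(σ) is g-granular (N(σ) is an integer multiple of 2^{−g(|σ|)} for each σ), and the savings S_N(σ) is a natural number for every σ. Moreover, if M is a martingale then N can be taken to be a martingale. -/
open Filter Finset

lemma cover_append (M : List Bool → ℝ) (σ : List Bool) (b : Bool) :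
    cover M (σ ++ [b]) = cover M σ + (if b then wager M σ else -wager M σ) := by
  unfold cover
  rw [List.length_append, List.length_singleton, Finset.sum_range_succ]
  have h1 : ∀ i ∈ Finset.range σ.length,
      (if (σ ++ [b]).getD i false then wager M ((σ ++ [b]).take i)
        else -wager M ((σ ++ [b]).take i))
      = (if σ.getD i false then wager M (σ.take i) else -wager M (σ.take i)) := by
    intro i hi
    rw [Finset.mem_range] at hi
    rw [List.getD_append _ _ _ _ hi, List.take_append_of_le_length hi.le]
  rw [Finset.sum_congr rfl h1]
  have h2 : (σ ++ [b]).getD σ.length false = b := by simp [List.getD]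
  rw [h2, List.take_left]
  ring

lemma savings_append (M : List Bool → ℝ) (σ : List Bool) (b : Bool) :
    savings M (σ ++ [b]) = savings M σ +
      (M σ - (M (σ ++ [false]) + M (σ ++ [true])) / 2) := by
  unfold savings
  rw [cover_append]
  cases b <;> simp [wager] <;> ring

lemma savings_nonneg (M : List Bool → ℝ) (hM : IsSupermartingale M) (σ : List Bool) :
    0 ≤ savings M σ := by
  induction σ using List.reverseRecOn with
  | nil => simp [savings, cover]
  | append_singleton σ b ih =>
    rw [savings_append]
    have := hM.2 σ
    nlinarith

lemma grid_coarsen {a b : ℕ} (hab : a ≤ b) (k : ℤ) :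
    ∃ k' : ℤ, (k:ℝ) * (2:ℝ) ^ (-(a:ℤ)) = k' * (2:ℝ) ^ (-(b:ℤ)) := by
  refine ⟨k * 2 ^ (b - a), ?_⟩
  have h : ((2:ℝ) ^ (b - a) : ℝ) = (2:ℝ) ^ ((b:ℤ) - (a:ℤ)) := by
    rw [← zpow_natCast (2:ℝ) (b - a)]
    congr 1
    omega
  push_cast
  rw [h, mul_assoc, ← zpow_add₀ (two_ne_zero)]
  congr 2
  ring

/-- Lemma 2.2: any g-granular supermartingale can be replaced, up to a bounded difference,
by one whose capital function is g-granular and whose savings take integer values;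
moreover martingales are replaced by martingales. -/
theorem granular_integer_savings (g : ℕ → ℕ) (hg : Monotone g) (M : List Bool → ℝ)
    (hM : IsSupermartingale M) (hgr : GranularWagers g M) :
    ∃ N : List Bool → ℝ, IsSupermartingale N ∧
      (∃ C : ℝ, ∀ σ, |M σ - N σ| ≤ C) ∧
      (∀ σ : List Bool, ∃ k : ℤ, N σ = k * (2:ℝ) ^ (-(g σ.length : ℤ))) ∧
      (∀ σ : List Bool, ∃ n : ℕ, savings N σ = n) ∧
      (IsMartingale M → IsMartingale N) := by
  classical
  set R : ℝ := ⌈(2:ℝ) ^ (g 0 : ℕ) * M []⌉ * (2:ℝ) ^ (-(g 0 : ℤ)) with hR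
  set N : List Bool → ℝ := fun σ => R + (cover M σ - M []) - ⌊savings M σ⌋ with hN
  -- basic facts
  have hSnn := savings_nonneg M hM
  have hRge : M [] ≤ R := by
    rw [hR]
    have h2 : (0:ℝ) < (2:ℝ) ^ (g 0 : ℕ) := by positivity
    have := Int.le_ceil ((2:ℝ) ^ (g 0 : ℕ) * M [])
    have hz : (2:ℝ) ^ (-(g 0 : ℤ)) = ((2:ℝ) ^ (g 0 : ℕ))⁻¹ := by
      rw [zpow_neg, zpow_natCast]
    rw [hz, ← div_eq_mul_inv, le_div_iff₀ h2]
    linarith [mul_comm ((2:ℝ) ^ (g 0 : ℕ)) (M [])]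
  have hRlt : R ≤ M [] + 1 := by
    rw [hR]
    have h2 : (0:ℝ) < (2:ℝ) ^ (g 0 : ℕ) := by positivity
    have h1 : ((2:ℝ) ^ (g 0 : ℕ)) ≥ 1 := one_le_pow₀ (by norm_num)
    have hc := Int.ceil_lt_add_one ((2:ℝ) ^ (g 0 : ℕ) * M [])
    have hz : (2:ℝ) ^ (-(g 0 : ℤ)) = ((2:ℝ) ^ (g 0 : ℕ))⁻¹ := by
      rw [zpow_neg, zpow_natCast]
    rw [hz, ← div_eq_mul_inv, div_le_iff₀ h2]
    nlinarith
  -- N σ in terms of M: N σ = M σ + (savings M σ - ⌊savings M σ⌋) + (R - M [])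
  have hNM : ∀ σ, N σ = M σ + (savings M σ - ⌊savings M σ⌋) + (R - M []) := by
    intro σ
    simp only [hN, savings]
    ring
  have hNnn : ∀ σ, 0 ≤ N σ := by
    intro σ
    rw [hNM]
    have h2 : (⌊savings M σ⌋ : ℝ) ≤ savings M σ := Int.floor_le _
    have := hM.1 σ
    linarith
  -- savings equal for both children
  have hSeq : ∀ σ (b : Bool), savings M (σ ++ [b]) = savings M σ +
      (M σ - (M (σ ++ [false]) + M (σ ++ [true])) / 2) := savings_append M
  have hS01 : ∀ σ, savings M (σ ++ [false]) = savings M (σ ++ [true]) := by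
    intro σ; rw [hSeq, hSeq]
  have hSmono : ∀ σ (b : Bool), savings M σ ≤ savings M (σ ++ [b]) := by
    intro σ b
    rw [hSeq]
    have := hM.2 σ
    linarith
  -- N supermartingale
  have hNsm : IsSupermartingale N := by
    refine ⟨hNnn, fun σ => ?_⟩
    have e0 : N (σ ++ [false]) = R + (cover M σ - wager M σ - M []) - ⌊savings M (σ ++ [false])⌋ := by
      simp only [hN, cover_append]; simp; try ring
    have e1 : N (σ ++ [true]) = R + (cover M σ + wager M σ - M []) - ⌊savings M (σ ++ [true])⌋ := by
      simp only [hN, cover_append]; simp; try ring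
    have hf : (⌊savings M σ⌋ : ℝ) ≤ ⌊savings M (σ ++ [false])⌋ := by
      exact_mod_cast Int.floor_le_floor (hSmono σ false)
    rw [e0, e1, hS01 σ]
    simp only [hN]
    rw [hS01 σ] at hf
    linarith
  -- martingale case
  have hNmart : IsMartingale M → IsMartingale N := by
    intro hMm
    refine ⟨hNnn, fun σ => ?_⟩
    have hS0 : ∀ τ, savings M τ = 0 := by
      intro τ
      induction τ using List.reverseRecOn with
      | nil => simp [savings, cover]
      | append_singleton τ b ih =>
        rw [hSeq, ih]
        have := hMm.2 τ
        linarith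
    have e0 : N (σ ++ [false]) = R + (cover M σ - wager M σ - M []) - ⌊savings M (σ ++ [false])⌋ := by
      simp only [hN, cover_append]; simp; try ring
    have e1 : N (σ ++ [true]) = R + (cover M σ + wager M σ - M []) - ⌊savings M (σ ++ [true])⌋ := by
      simp only [hN, cover_append]; simp; try ring
    rw [e0, e1, hS0, hS0]
    simp only [hN, hS0 σ]
    simp
    ring
  -- bounded difference
  have hbd : ∃ C : ℝ, ∀ σ, |M σ - N σ| ≤ C := by
    refine ⟨2, fun σ => ?_⟩
    rw [hNM]
    have h2 : (⌊savings M σ⌋ : ℝ) ≤ savings M σ := Int.floor_le _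
    have h3 : savings M σ < ⌊savings M σ⌋ + 1 := Int.lt_floor_add_one _
    rw [abs_le]
    constructor <;> nlinarith [hRge, hRlt]
  -- granularity
  have hcov : ∀ σ : List Bool, ∃ k : ℤ,
      cover M σ - M [] = k * (2:ℝ) ^ (-(g σ.length : ℤ)) := by
    intro σ
    induction σ using List.reverseRecOn with
    | nil => exact ⟨0, by simp [cover]⟩
    | append_singleton σ b ih =>
      obtain ⟨k, hk⟩ := ih
      obtain ⟨j, hj⟩ := hgr σ
      obtain ⟨k', hk'⟩ := grid_coarsen (hg (Nat.le_succ σ.length)) k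
      have hlen : (σ ++ [b]).length = σ.length + 1 := by simp
      refine ⟨if b then k' + j else k' - j, ?_⟩
      rw [cover_append, hlen]
      cases b <;> simp only [if_true, if_false, Bool.false_eq_true, ite_true, ite_false] <;>
        · rw [hj]; push_cast; nlinarith [hk, hk']
  have hgran : ∀ σ : List Bool, ∃ k : ℤ, N σ = k * (2:ℝ) ^ (-(g σ.length : ℤ)) := by
    intro σ
    obtain ⟨k, hk⟩ := hcov σ
    obtain ⟨r, hr⟩ := grid_coarsen (hg (Nat.zero_le σ.length)) ⌈(2:ℝ) ^ (g 0 : ℕ) * M []⌉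
    obtain ⟨f, hf⟩ := grid_coarsen (Nat.zero_le (g σ.length)) ⌊savings M σ⌋
    have hR' : R = (r:ℝ) * (2:ℝ) ^ (-(g σ.length : ℤ)) := by rw [hR, hr]
    have hf' : ((⌊savings M σ⌋ : ℤ) : ℝ) = (f:ℝ) * (2:ℝ) ^ (-(g σ.length : ℤ)) := by
      rw [← hf]; norm_num
    refine ⟨r + k - f, ?_⟩
    show R + (cover M σ - M []) - (⌊savings M σ⌋ : ℝ) = _
    rw [hR', hk, hf']
    push_cast
    ring
  -- integer savings
  have hintsav : ∀ σ : List Bool, ∃ n : ℕ, savings N σ = n := by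
    intro σ
    have hwN : ∀ τ, wager N τ = wager M τ := by
      intro τ
      simp only [wager, hN, cover_append, hS01 τ]
      simp
      try ring
    have hN0 : N [] = R := by simp [hN, savings, cover]
    have hcovN : cover N σ = N [] + (cover M σ - M []) := by
      simp only [cover]
      have hsum : ∀ i ∈ Finset.range σ.length,
          (if σ.getD i false then wager N (σ.take i) else -wager N (σ.take i))
          = (if σ.getD i false then wager M (σ.take i) else -wager M (σ.take i)) :=
        fun i _ => by rw [hwN]
      rw [Finset.sum_congr rfl hsum]
      ring
    have hsav : savings N σ = (⌊savings M σ⌋ : ℝ) := by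
      have h0 : savings N σ = cover N σ - N σ := rfl
      rw [h0, hcovN, hN0]
      simp only [hN]
      ring
    refine ⟨(⌊savings M σ⌋).toNat, ?_⟩
    rw [hsav]
    exact_mod_cast (Int.toNat_of_nonneg (Int.floor_nonneg.mpr (hSnn σ))).symm
  exact ⟨N, hNsm, hbd, hgran, hintsav, hNmart⟩
end

section
/- Taking N(σ) = T(σ) − ⌊S_M(σ)⌋, where T is the martingale with the same wagers as the supermartingale M and T(λ) = ⌈M(λ)⌉, yields a supermartingale satisfying 0 ≤ M(σ) ≤ N(σ) and N(σ) − M(σ) ≤ 2 for all σ. -/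
open Filter Finset

lemma savings_mono (M : List Bool → ℝ) (hM : IsSupermartingale M)
    (σ : List Bool) (b : Bool) : savings M σ ≤ savings M (σ ++ [b]) := by
  have h := hM.2 σ
  simp only [savings, cover_append, wager]
  cases b <;> simp <;> linarith

/-- The construction N(σ) = T(σ) − ⌊S_M(σ)⌋, where T is the martingale with the same
wagers as M and T(λ) = ⌈M(λ)⌉, is a supermartingale with 0 ≤ M ≤ N and N − M ≤ 2. -/
theorem floor_saving_supermartingale (M : List Bool → ℝ) (hM : IsSupermartingale M) :
    IsSupermartingale (fun σ => (cover M σ - M [] + ⌈M []⌉) - ⌊savings M σ⌋) ∧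
      ∀ σ : List Bool,
        0 ≤ M σ ∧
        M σ ≤ (cover M σ - M [] + ⌈M []⌉) - ⌊savings M σ⌋ ∧
        ((cover M σ - M [] + ⌈M []⌉) - ⌊savings M σ⌋) - M σ ≤ 2 := by
  have key : ∀ σ : List Bool,
      0 ≤ M σ ∧
      M σ ≤ (cover M σ - M [] + ⌈M []⌉) - ⌊savings M σ⌋ ∧
      ((cover M σ - M [] + ⌈M []⌉) - ⌊savings M σ⌋) - M σ ≤ 2 := by
    intro σ
    have h0 := hM.1 σ
    have hceil : M [] ≤ (⌈M []⌉ : ℝ) := Int.le_ceil _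
    have hceil' : (⌈M []⌉ : ℝ) < M [] + 1 := Int.ceil_lt_add_one _
    have hfl : (⌊savings M σ⌋ : ℝ) ≤ savings M σ := Int.floor_le _
    have hfl' : savings M σ < (⌊savings M σ⌋ : ℝ) + 1 := Int.lt_floor_add_one _
    have hs : cover M σ = savings M σ + M σ := by simp [savings]
    refine ⟨h0, ?_, ?_⟩ <;> rw [hs] <;> linarith
  refine ⟨⟨fun σ => le_trans (key σ).1 (key σ).2.1, fun σ => ?_⟩, key⟩
  have hf : (⌊savings M σ⌋ : ℝ) ≤ (⌊savings M (σ ++ [false])⌋ : ℝ) := by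
    exact_mod_cast Int.floor_le_floor (savings_mono M hM σ false)
  have ht : (⌊savings M σ⌋ : ℝ) ≤ (⌊savings M (σ ++ [true])⌋ : ℝ) := by
    exact_mod_cast Int.floor_le_floor (savings_mono M hM σ true)
  have hcf := cover_append M σ false
  have hct := cover_append M σ true
  simp only [if_pos, if_neg, Bool.false_eq_true, not_false_iff] at hcf hct
  simp only []
  rw [hcf, hct]
  linarith
end

section
/- Equivalence for outcome 1: for reals t ≥ 0, m > 0, g⁺ > 0, with q = ⌊t/m⌋, r = t − qm, and w an integer multiple of g⁺: (t+w)/(m+g⁺) ≤ t/m if and only if w ≤ g⁺·q + g⁺·r/m, which (since 0 ≤ r < m, q ∈ ℤ, w ∈ g⁺ℤ) holds if and only if w ≤ g⁺·q. -/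
open Filter Finset

theorem mul_add_mul_sub_div_eq {α : Type*} [Field α] {m : α} (hm : m ≠ 0) (g q t : α) :
    g * q + g * (t - q * m) / m = g * t / m := by
  field_simp
  ring

theorem add_div_add_le_div_iff {α : Type*} [Field α] [LinearOrder α] [IsStrictOrderedRing α]
    {t w m g : α} (hm : 0 < m) (hmg : 0 < m + g) :
    (t + w) / (m + g) ≤ t / m ↔ w ≤ g * t / m := by
  rw [div_le_div_iff₀ hmg hm, le_div_iff₀ hm]
  constructor <;> intro h <;> linarith

theorem intCast_mul_le_mul_iff_le_mul_floor {α : Type*} [Field α] [LinearOrder α]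
    [IsStrictOrderedRing α] [FloorRing α] {g : α} (hg : 0 < g) (k : ℤ) (x : α) :
    k * g ≤ g * x ↔ k * g ≤ g * ⌊x⌋ := by
  rw [mul_comm g, mul_comm g, mul_le_mul_iff_left₀ hg, mul_le_mul_iff_left₀ hg,
    Int.cast_le, Int.le_floor]

theorem ratio_outcome_one_iff_general (t m w gp : ℝ) (hm : 0 < m) (hgp : 0 < gp)
    (hw : ∃ k : ℤ, w = k * gp) :
    ((t + w) / (m + gp) ≤ t / m ↔
        w ≤ gp * ⌊t / m⌋ + gp * (t - ⌊t / m⌋ * m) / m) ∧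
      (w ≤ gp * ⌊t / m⌋ + gp * (t - ⌊t / m⌋ * m) / m ↔ w ≤ gp * ⌊t / m⌋) := by
  obtain ⟨k, rfl⟩ := hw
  rw [mul_add_mul_sub_div_eq hm.ne']
  refine ⟨add_div_add_le_div_iff hm (by linarith), ?_⟩
  rw [mul_div_assoc]
  exact intCast_mul_le_mul_iff_le_mul_floor hgp k (t / m)

/-- Equivalence for outcome 1: the ratio does not increase iff w ≤ g⁺·q + g⁺·r/m iff
w ≤ g⁺·q, where q, r are the quotient and remainder of t by m. -/
theorem ratio_outcome_one_iff (t m w gp : ℝ) (hm : 0 < m) (hgp : 0 < gp) (ht : 0 ≤ t)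
    (hw : ∃ k : ℤ, w = k * gp) :
    ((t + w) / (m + gp) ≤ t / m ↔
        w ≤ gp * ⌊t / m⌋ + gp * (t - ⌊t / m⌋ * m) / m) ∧
      (w ≤ gp * ⌊t / m⌋ + gp * (t - ⌊t / m⌋ * m) / m ↔ w ≤ gp * ⌊t / m⌋) :=
  ratio_outcome_one_iff_general t m w gp hm hgp hw
end

section
/- In the proof of Theorem 3.1 (savings under fine granularity): if G ∈ ℕ satisfies G > 2 + Σ_n 2^{−g(n)}, M is a supermartingale with M(σ) ≥ 1 for all σ, and N̂, N, l are defined as in the construction with N̂(λ) = N(λ) = ⌊G·M(λ)⌋ + 1, then for all σ the inequality (N̂(σ) − l(σ))/M(σ) ≥ G − Σ_{n∈ℕ} 2^{−g(n)} − 1 > 1 holds; in particular M(σ) + l(σ) < N̂(σ). -/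
open Filter Finset

/-- The g-granular rounding Int_g(σ,x). -/
noncomputable def intg (g : ℕ → ℕ) (σ : List Bool) (x : ℝ) : ℝ :=
  (if x < 0 then -1 else 1) *
    ((2:ℝ) ^ (-(g (σ.length + 1) : ℤ)) * ⌊|x| * (2:ℝ) ^ ((g (σ.length + 1) : ℤ))⌋)

lemma intg_bounds (g : ℕ → ℕ) (σ : List Bool) (x : ℝ) :
    x - (2:ℝ) ^ (-(g (σ.length + 1) : ℤ)) ≤ intg g σ x ∧
    intg g σ x ≤ x + (2:ℝ) ^ (-(g (σ.length + 1) : ℤ)) := by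
  set t : ℕ := g (σ.length + 1) with ht
  have he : (2:ℝ) ^ (-(t:ℤ)) * (2:ℝ) ^ ((t:ℤ)) = 1 := by
    rw [← zpow_add₀ (by norm_num : (2:ℝ) ≠ 0)]; simp
  have hepos : (0:ℝ) < (2:ℝ) ^ (-(t:ℤ)) := zpow_pos (by norm_num) _
  have h2pos : (0:ℝ) < (2:ℝ) ^ ((t:ℤ)) := zpow_pos (by norm_num) _
  unfold intg
  rw [← ht]
  by_cases hx : x < 0
  · rw [if_pos hx, abs_of_neg hx]
    have h1 : (⌊(-x) * (2:ℝ)^((t:ℤ))⌋ : ℝ) ≤ (-x) * (2:ℝ)^((t:ℤ)) := Int.floor_le _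
    have h2 : (-x) * (2:ℝ)^((t:ℤ)) - 1 < (⌊(-x) * (2:ℝ)^((t:ℤ))⌋ : ℝ) := by
      have := Int.lt_floor_add_one ((-x) * (2:ℝ)^((t:ℤ))); linarith
    constructor
    · nlinarith [mul_le_mul_of_nonneg_left h1 hepos.le]
    · nlinarith [mul_le_mul_of_nonneg_left h2.le hepos.le]
  · rw [if_neg hx, abs_of_nonneg (not_lt.mp hx)]
    have h1 : (⌊x * (2:ℝ)^((t:ℤ))⌋ : ℝ) ≤ x * (2:ℝ)^((t:ℤ)) := Int.floor_le _
    have h2 : x * (2:ℝ)^((t:ℤ)) - 1 < (⌊x * (2:ℝ)^((t:ℤ))⌋ : ℝ) := by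
      have := Int.lt_floor_add_one (x * (2:ℝ)^((t:ℤ))); linarith
    constructor
    · nlinarith [mul_le_mul_of_nonneg_left h2.le hepos.le]
    · nlinarith [mul_le_mul_of_nonneg_left h1 hepos.le]

set_option maxHeartbeats 2000000 in
/-- Key invariant in the proof of Theorem 3.1 (savings under fine granularity):
along the construction, (N̂(σ) − l(σ))/M(σ) ≥ G − Σ_n 2^{−g(n)} − 1 > 1, hence
M(σ) + l(σ) < N̂(σ).  Here l counts the doublings of M (tracked via the marker c),
N̂ is the martingale with initial capital ⌊G·M(λ)⌋+1 whose wagers are the granular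
roundings of the proportionally scaled wagers of M, and N(σ*i) = N̂(σ*i) − l(σ). -/
theorem fine_granularity_growth (g : ℕ → ℕ) (hg : Monotone g)
    (hsum : Summable fun n => (2:ℝ) ^ (-(g n : ℤ)))
    (G : ℕ) (hG : 2 + ∑' n, (2:ℝ) ^ (-(g n : ℤ)) < G)
    (M : List Bool → ℝ) (hM : IsSupermartingale M) (hM1 : ∀ σ, 1 ≤ M σ)
    (l : List Bool → ℕ) (c : List Bool → ℝ)
    (hl0 : l [] = 0) (hc0 : c [] = M [])
    (hlc : ∀ (σ : List Bool) (i : Bool),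
      (2 * c σ ≤ M (σ ++ [i]) →
        l (σ ++ [i]) = l σ + 1 ∧ c (σ ++ [i]) = M (σ ++ [i])) ∧
      (M (σ ++ [i]) < 2 * c σ →
        l (σ ++ [i]) = l σ ∧ c (σ ++ [i]) = c σ))
    (Nh N : List Bool → ℝ)
    (hNh0 : Nh [] = ⌊(G:ℝ) * M []⌋ + 1) (hN0 : N [] = Nh [])
    (hwag : ∀ σ : List Bool,
      wager Nh σ = intg g σ (wager M σ * (Nh σ - l σ) / M σ))
    (hNhmart : ∀ σ : List Bool,
      Nh (σ ++ [true]) = Nh σ + wager Nh σ ∧ Nh (σ ++ [false]) = Nh σ - wager Nh σ)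
    (hN : ∀ (σ : List Bool) (i : Bool), N (σ ++ [i]) = Nh (σ ++ [i]) - l σ) :
    ∀ σ : List Bool,
      (G:ℝ) - (∑' n, (2:ℝ) ^ (-(g n : ℤ))) - 1 ≤ (Nh σ - l σ) / M σ ∧
      1 < (G:ℝ) - (∑' n, (2:ℝ) ^ (-(g n : ℤ))) - 1 ∧
      M σ + l σ < Nh σ := by
  obtain ⟨hMnn, hMsup⟩ := hM
  set S : ℝ := ∑' n, (2:ℝ) ^ (-(g n : ℤ)) with hS
  have hterm : ∀ n : ℕ, (0:ℝ) ≤ (2:ℝ) ^ (-(g n : ℤ)) := fun n => (zpow_pos (by norm_num) _).le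
  have hSnn : (0:ℝ) ≤ S := tsum_nonneg hterm
  have hBgt : 1 < (G:ℝ) - S - 1 := by linarith
  have hpart : ∀ n : ℕ, (∑ k ∈ Finset.range n, (2:ℝ) ^ (-(g (k+1) : ℤ))) ≤ S := by
    intro n
    have h1 : (∑ k ∈ Finset.range (n+1), (2:ℝ) ^ (-(g k : ℤ))) ≤ S :=
      Summable.sum_le_tsum _ (fun i _ => hterm i) hsum
    rw [Finset.sum_range_succ'] at h1
    linarith [hterm 0]
  have key : ∀ σ : List Bool, (2:ℝ) ^ (l σ) ≤ c σ ∧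
      (G:ℝ) - (∑ k ∈ Finset.range σ.length, (2:ℝ) ^ (-(g (k+1) : ℤ)))
        - (1 - (2:ℝ) ^ (-(l σ : ℤ))) ≤ (Nh σ - l σ) / M σ := by
    intro σ
    induction σ using List.reverseRecOn with
    | nil =>
      refine ⟨by rw [hl0, hc0]; simpa using hM1 [], ?_⟩
      rw [hl0]
      simp only [List.length_nil, Finset.range_zero, Finset.sum_empty]
      have hMpos : (0:ℝ) < M [] := lt_of_lt_of_le one_pos (hM1 [])
      have hfl : (G:ℝ) * M [] < Nh [] := by
        rw [hNh0]; exact Int.lt_floor_add_one _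
      rw [le_div_iff₀ hMpos]
      norm_num
      nlinarith
    | append_singleton τ i ih =>
      have hMpos : (0:ℝ) < M τ := lt_of_lt_of_le one_pos (hM1 τ)
      have hM'pos : (0:ℝ) < M (τ ++ [i]) := lt_of_lt_of_le one_pos (hM1 _)
      set r : ℝ := (Nh τ - l τ) / M τ with hr
      set ε : ℝ := (2:ℝ) ^ (-(g (τ.length + 1) : ℤ)) with hε
      have hεpos : (0:ℝ) < ε := zpow_pos (by norm_num) _
      have hεle1 : ε ≤ 1 := by
        rw [hε]
        calc (2:ℝ) ^ (-(g (τ.length + 1) : ℤ)) ≤ (2:ℝ) ^ (0:ℤ) := by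
              apply zpow_le_zpow_right₀ (by norm_num)
              simp
          _ = 1 := by norm_num
      have hlpow : (0:ℝ) < (2:ℝ) ^ (-(l τ : ℤ)) := zpow_pos (by norm_num) _
      have hr1 : 1 < r := by
        have h2 := ih.2
        have h3 := hpart τ.length
        linarith
      have hNum : Nh τ - l τ = r * M τ := by
        rw [hr, div_mul_cancel₀ _ (ne_of_gt hMpos)]
      -- bounds on the wager of Nh
      have hx : wager M τ * (Nh τ - l τ) / M τ = wager M τ * r := by
        rw [hr, mul_div_assoc]
      have hib := intg_bounds g τ (wager M τ * (Nh τ - l τ) / M τ)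
      rw [← hwag τ, hx, ← hε] at hib
      obtain ⟨hw1, hw2⟩ := hib
      -- the key recursive step
      have hstep : ∀ s : ℝ, (s = 1 ∨ s = -1) →
          M (τ ++ [i]) ≤ M τ + s * wager M τ →
          Nh (τ ++ [i]) = Nh τ + s * wager Nh τ →
          r - ε ≤ (Nh (τ ++ [i]) - l τ) / M (τ ++ [i]) := by
        intro s hs hMle hNheq
        rw [le_div_iff₀ hM'pos, hNheq]
        have hge1 : (1:ℝ) ≤ M τ + s * wager M τ := le_trans (hM1 _) hMle
        have h1 : (r - ε) * M (τ ++ [i]) ≤ (r - ε) * (M τ + s * wager M τ) :=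
          mul_le_mul_of_nonneg_left hMle (by linarith)
        have h2 : (r - ε) * (M τ + s * wager M τ) ≤ Nh τ + s * wager Nh τ - l τ := by
          have hNl : Nh τ - (l τ : ℝ) = r * M τ := hNum
          rcases hs with h | h <;> subst h <;> nlinarith
        linarith
      have hstepi : r - ε ≤ (Nh (τ ++ [i]) - l τ) / M (τ ++ [i]) := by
        have hsup := hMsup τ
        have hwM : wager M τ = (M (τ ++ [true]) - M (τ ++ [false])) / 2 := rfl
        cases i with
        | true =>
          exact hstep 1 (Or.inl rfl) (by rw [hwM]; linarith) (by rw [(hNhmart τ).1]; ring)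
        | false =>
          exact hstep (-1) (Or.inr rfl) (by rw [hwM]; linarith) (by rw [(hNhmart τ).2]; ring)
      have hlen : (τ ++ [i]).length = τ.length + 1 := by simp
      have hsum' : (∑ k ∈ Finset.range (τ ++ [i]).length, (2:ℝ) ^ (-(g (k+1) : ℤ)))
          = (∑ k ∈ Finset.range τ.length, (2:ℝ) ^ (-(g (k+1) : ℤ))) + ε := by
        rw [hlen, Finset.sum_range_succ, hε]
      rcases le_or_gt (2 * c τ) (M (τ ++ [i])) with hd | hd
      · obtain ⟨hl', hc'⟩ := (hlc τ i).1 hd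
        have hcge : (2:ℝ) ^ (l τ) ≤ c τ := ih.1
        constructor
        · rw [hl', hc', pow_succ]
          nlinarith
        · rw [hl', hsum']
          have hM'ge : (2:ℝ) ^ (l τ + 1) ≤ M (τ ++ [i]) := by
            rw [pow_succ]; nlinarith
          have hhalf : (1:ℝ) / M (τ ++ [i]) ≤ (2:ℝ) ^ (-((l τ : ℤ) + 1)) := by
            have hpow : (2:ℝ) ^ (-((l τ : ℤ) + 1)) = ((2:ℝ) ^ (l τ + 1))⁻¹ := by
              rw [← zpow_natCast (2:ℝ) (l τ + 1), ← zpow_neg]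
              push_cast
              ring_nf
            rw [hpow, one_div]
            exact inv_anti₀ (by positivity) hM'ge
          have hsplit : (Nh (τ ++ [i]) - ((l τ : ℝ) + 1)) / M (τ ++ [i])
              = (Nh (τ ++ [i]) - l τ) / M (τ ++ [i]) - 1 / M (τ ++ [i]) := by
            ring
          have hdup : (2:ℝ) ^ (-((l τ : ℤ) + 1)) * 2 = (2:ℝ) ^ (-(l τ : ℤ)) := by
            rw [← zpow_add_one₀ (by norm_num : (2:ℝ) ≠ 0)]
            norm_num
          have h2 := ih.2
          push_cast
          rw [hsplit]
          push_cast at h2 ⊢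
          linarith
      · obtain ⟨hl', hc'⟩ := (hlc τ i).2 hd
        refine ⟨by rw [hl', hc']; exact ih.1, ?_⟩
        rw [hl', hsum']
        have h2 := ih.2
        linarith
  intro σ
  obtain ⟨-, hinv⟩ := key σ
  have hlb : (G:ℝ) - S - 1 ≤ (Nh σ - l σ) / M σ := by
    have h3 := hpart σ.length
    have h4 : (0:ℝ) ≤ (2:ℝ) ^ (-(l σ : ℤ)) := (zpow_pos (by norm_num) _).le
    linarith
  refine ⟨hlb, hBgt, ?_⟩
  have hMpos : (0:ℝ) < M σ := lt_of_lt_of_le one_pos (hM1 σ)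
  have h5 : 1 < (Nh σ - l σ) / M σ := lt_of_lt_of_le hBgt hlb
  have h6 : 1 * M σ < Nh σ - l σ := (lt_div_iff₀ hMpos).mp h5
  linarith
end
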